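/- Let ψ ∈ C⁴(ℝ) be 1-periodic and even, and let Λ be the triangular lattice with nearest-neighbour bond set B. Suppose there exists y : Λ → ℝ and λ > 0 such that Σ_{b∈B} ψ''(Dy_b)(Dv_b)² ≥ λ Σ_{b∈B}(Dv_b)² for all finitely supported v : Λ → ℝ, and suppose dist(Dy_b, ℤ) → 0 as dist(b, 0) → ∞. Then ψ''(0) ≥ λ. Consequently the homogeneous state y ≡ 0 is strongly stable: Σ_{b∈B} ψ''(0)(Dv_b)² ≥ λ Σ_{b∈B}(Dv_b)² for all such v. -/

import Mathlib

noncomputable section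
open Real

abbrev E2 := EuclideanSpace ℝ (Fin 2)

/-- Triangular lattice basis vectors. -/
def la1 : E2 := !₂[1, 0]
def la2 : E2 := !₂[1/2, Real.sqrt 3 / 2]

/-- The triangular lattice Λ = (a₁+a₂)/3 + ℤa₁ + ℤa₂. -/
def TriLat : Set E2 :=
  {x | ∃ m n : ℤ, x = (3 : ℝ)⁻¹ • (la1 + la2) + m • la1 + n • la2}

/-- Nearest-neighbour bonds of the triangular lattice. -/
def Bonds : Set (E2 × E2) :=
  {p | p.1 ∈ TriLat ∧ p.2 ∈ TriLat ∧ ‖p.2 - p.1‖ = 1}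

/-! Test the stability inequality with the unit mass at a lattice site ξ: the energy then only
sees the finitely many bonds at ξ, so `lam` is at most the largest coefficient `ψ''(Dy_b)` over
those bonds. Far from the origin `Dy_b` is close to an integer, where the 1-periodic, continuous
`ψ''` is close to `ψ''(0)`; letting ξ go to infinity gives `lam ≤ ψ''(0)`. -/

def triLatPt (m n : ℤ) : E2 := (3 : ℝ)⁻¹ • (la1 + la2) + m • la1 + n • la2

lemma triLatPt_apply_zero (m n : ℤ) : triLatPt m n 0 = 1 / 2 + m + n / 2 := by
  simp [triLatPt, la1, la2]; ring

lemma triLatPt_apply_one (m n : ℤ) : triLatPt m n 1 = √3 / 6 + n * (√3 / 2) := by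
  simp [triLatPt, la1, la2]; ring

lemma triLatPt_add_la1 (m n : ℤ) : triLatPt m n + la1 = triLatPt (m + 1) n := by
  simp only [triLatPt, add_zsmul, one_zsmul]; abel

lemma norm_la1 : ‖la1‖ = 1 := by
  simp [EuclideanSpace.norm_eq, Fin.sum_univ_two, la1]

lemma mem_triLat_iff {x : E2} : x ∈ TriLat ↔ ∃ m n : ℤ, triLatPt m n = x := by
  simp only [TriLat, Set.mem_ofPred_eq, triLatPt, eq_comm]

lemma abs_le_of_norm_triLatPt_le {m n : ℤ} {C : ℝ} (h : ‖triLatPt m n‖ ≤ C) :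
    |(m : ℝ)| ≤ 2 * C + 1 ∧ |(n : ℝ)| ≤ 2 * C + 1 := by
  have h0 := (PiLp.norm_apply_le (triLatPt m n) 0).trans h
  have h1 := (PiLp.norm_apply_le (triLatPt m n) 1).trans h
  rw [triLatPt_apply_zero, Real.norm_eq_abs, abs_le] at h0
  rw [triLatPt_apply_one, Real.norm_eq_abs, abs_le] at h1
  have hs : 1 ≤ √3 := Real.one_le_sqrt.mpr (by norm_num)
  have hn : |(n : ℝ)| ≤ 2 * C + 1 := by
    rw [abs_le]; constructor <;> nlinarith
  refine ⟨?_, hn⟩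
  rw [abs_le] at hn ⊢
  constructor <;> linarith

lemma finite_triLat_inter_closedBall (x : E2) (r : ℝ) :
    (TriLat ∩ Metric.closedBall x r).Finite := by
  set K : ℤ := ⌈2 * (‖x‖ + r) + 1⌉
  have hbox := (Set.finite_Icc (-K) K).prod (Set.finite_Icc (-K) K)
  refine (hbox.image fun p => triLatPt p.1 p.2).subset ?_
  rintro _ ⟨hp, hball⟩
  obtain ⟨m, n, rfl⟩ := mem_triLat_iff.mp hp
  have hnorm : ‖triLatPt m n‖ ≤ ‖x‖ + r := by
    have := norm_le_norm_add_norm_sub' (triLatPt m n) x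
    rw [Metric.mem_closedBall, dist_eq_norm] at hball
    linarith
  have hK : 2 * (‖x‖ + r) + 1 ≤ (K : ℝ) := Int.le_ceil _
  obtain ⟨hm, hn⟩ := abs_le_of_norm_triLatPt_le hnorm
  rw [abs_le] at hm hn
  refine ⟨(m, n), ⟨⟨?_, ?_⟩, ⟨?_, ?_⟩⟩, rfl⟩ <;> rw [← Int.cast_le (R := ℝ)] <;> push_cast <;> linarith

lemma finite_bonds_incident (ξ : E2) : {b : Bonds | b.1.1 = ξ ∨ b.1.2 = ξ}.Finite := by
  refine ((finite_triLat_inter_closedBall ξ 1).prod (finite_triLat_inter_closedBall ξ 1)).preimage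
    Subtype.val_injective.injOn |>.subset ?_
  rintro ⟨⟨x, z⟩, hx, hz, hxz⟩ hξ
  simp only [Set.mem_ofPred_eq] at hξ
  rw [← dist_eq_norm] at hxz
  rcases hξ with rfl | rfl
  · exact ⟨⟨hx, Metric.mem_closedBall_self zero_le_one⟩, hz, by rw [Metric.mem_closedBall, hxz]⟩
  · exact ⟨⟨hx, by rw [Metric.mem_closedBall, dist_comm, hxz]⟩, hz,
      Metric.mem_closedBall_self zero_le_one⟩

lemma exists_mem_triLat_le_norm (R : ℝ) : ∃ ξ ∈ TriLat, R ≤ ‖ξ‖ := by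
  refine ⟨triLatPt (⌈R⌉₊ : ℤ) 0, mem_triLat_iff.mpr ⟨_, _, rfl⟩, ?_⟩
  have h0 := (PiLp.norm_apply_le (triLatPt (⌈R⌉₊ : ℤ) 0) 0)
  rw [triLatPt_apply_zero, Real.norm_eq_abs] at h0
  have hR : R ≤ (⌈R⌉₊ : ℝ) := Nat.le_ceil R
  simp only [Int.cast_natCast, Int.cast_zero, zero_div, add_zero] at h0
  linarith [le_abs_self (1 / 2 + (⌈R⌉₊ : ℝ))]

lemma Bonds.le_norm_fst {b : E2 × E2} (hb : b ∈ Bonds) {ξ : E2} (hξ : b.1 = ξ ∨ b.2 = ξ)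
    {R : ℝ} (hR : R + 1 ≤ ‖ξ‖) : R ≤ ‖b.1‖ := by
  have := norm_sub_norm_le b.2 b.1
  rw [hb.2.2] at this
  rcases hξ with rfl | rfl <;> linarith

lemma le_of_mul_tsum_le_tsum_mul {ι : Type*} {F a : ι → ℝ} {lam c : ℝ}
    (hfin : F.support.Finite) (hF : ∀ i, 0 ≤ F i) {i₀ : ι} (hi₀ : 0 < F i₀)
    (ha : ∀ i, F i ≠ 0 → a i ≤ c) (h : lam * ∑' i, F i ≤ ∑' i, a i * F i) : lam ≤ c := by
  have hFs : Summable F := summable_of_hasFiniteSupport hfin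
  have haF : Summable fun i => a i * F i :=
    summable_of_hasFiniteSupport (hfin.subset (Function.support_mul_subset_right a F))
  have hle : ∑' i, a i * F i ≤ c * ∑' i, F i := by
    rw [← tsum_mul_left]
    refine haF.tsum_le_tsum (fun i => ?_) (hFs.mul_left c)
    by_cases hi : F i = 0
    · simp [hi]
    · exact mul_le_mul_of_nonneg_right (ha i hi) (hF i)
  exact le_of_mul_le_mul_right (h.trans hle) (hFs.tsum_pos hF i₀ hi₀)

lemma le_of_stable_of_le_at_site {a : Bonds → ℝ} {lam c : ℝ}
    (hstab : ∀ v : E2 → ℝ, (Function.support v).Finite →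
      lam * ∑' b : Bonds, (v b.1.2 - v b.1.1) ^ 2 ≤ ∑' b : Bonds, a b * (v b.1.2 - v b.1.1) ^ 2)
    {ξ : E2} (hξ : ξ ∈ TriLat) (ha : ∀ b : Bonds, (b.1.1 = ξ ∨ b.1.2 = ξ) → a b ≤ c) :
    lam ≤ c := by
  set v : E2 → ℝ := Set.indicator {ξ} 1
  have hincident : ∀ b : Bonds, (v b.1.2 - v b.1.1) ^ 2 ≠ 0 → b.1.1 = ξ ∨ b.1.2 = ξ := by
    intro b hb
    by_contra! h
    simp [v, h.1, h.2] at hb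
  obtain ⟨m, n, rfl⟩ := mem_triLat_iff.mp hξ
  have hb₀ : (triLatPt m n, triLatPt m n + la1) ∈ Bonds :=
    ⟨hξ, by rw [triLatPt_add_la1]; exact mem_triLat_iff.mpr ⟨_, _, rfl⟩,
      by rw [add_sub_cancel_left, norm_la1]⟩
  refine le_of_mul_tsum_le_tsum_mul ((finite_bonds_incident _).subset hincident)
    (fun b => sq_nonneg _) (i₀ := ⟨_, hb₀⟩) ?_ (fun b hb => ha b (hincident b hb))
    (hstab v (Set.finite_singleton _ |>.subset (Set.support_indicator_subset)))
  have hne : triLatPt m n + la1 ≠ triLatPt m n := by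
    intro h
    simpa [norm_la1] using congrArg norm (add_eq_left.mp h)
  simp [v, hne]

lemma Function.Periodic.iteratedDeriv {f : ℝ → ℝ} {c : ℝ} (hf : Function.Periodic f c) (n : ℕ) :
    Function.Periodic (iteratedDeriv n f) c := fun t => by
  simpa [funext hf] using (congrFun (iteratedDeriv_comp_add_const n f c) t).symm

lemma Function.Periodic.exists_pos_le_add_of_near_int {f : ℝ → ℝ} (hf : Function.Periodic f 1)
    (hc : ContinuousAt f 0) {δ : ℝ} (hδ : 0 < δ) :
    ∃ ε > 0, ∀ (t : ℝ) (k : ℤ), |t - k| < ε → f t ≤ f 0 + δ := by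
  obtain ⟨ε, hε, hball⟩ := Metric.continuousAt_iff.mp hc δ hδ
  refine ⟨ε, hε, fun t k htk => ?_⟩
  have h := hball (x := t - k) (by rwa [Real.dist_eq, sub_zero])
  rw [Real.dist_eq, ← mul_one (k : ℝ), hf.sub_int_mul_eq] at h
  linarith [(abs_lt.mp h).2]

theorem stmt7_general (ψ : ℝ → ℝ) (hψ : ContDiff ℝ 4 ψ)
    (hper : ∀ t : ℝ, ψ (t + 1) = ψ t)
    (y : E2 → ℝ) (lam : ℝ)
    (hstab : ∀ v : E2 → ℝ, (Function.support v).Finite →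
      lam * ∑' b : Bonds, (v (b : E2 × E2).2 - v (b : E2 × E2).1) ^ 2 ≤
      ∑' b : Bonds, iteratedDeriv 2 ψ (y (b : E2 × E2).2 - y (b : E2 × E2).1) *
        (v (b : E2 × E2).2 - v (b : E2 × E2).1) ^ 2)
    (hdecay : ∀ ε : ℝ, 0 < ε → ∃ R : ℝ, ∀ b ∈ Bonds, R ≤ ‖b.1‖ →
      ∃ k : ℤ, |y b.2 - y b.1 - k| < ε) :
    lam ≤ iteratedDeriv 2 ψ 0 ∧
    ∀ v : E2 → ℝ, (Function.support v).Finite →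
      lam * ∑' b : Bonds, (v (b : E2 × E2).2 - v (b : E2 × E2).1) ^ 2 ≤
      iteratedDeriv 2 ψ 0 * ∑' b : Bonds, (v (b : E2 × E2).2 - v (b : E2 × E2).1) ^ 2 := by
  have hper2 : Function.Periodic (iteratedDeriv 2 ψ) 1 := Function.Periodic.iteratedDeriv hper 2
  have hcont : ContinuousAt (iteratedDeriv 2 ψ) 0 :=
    (hψ.continuous_iteratedDeriv 2 (by norm_num)).continuousAt
  have hle : lam ≤ iteratedDeriv 2 ψ 0 := by
    refine le_of_forall_pos_le_add fun δ hδ => ?_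
    obtain ⟨ε, hε, hnear⟩ := hper2.exists_pos_le_add_of_near_int hcont hδ
    obtain ⟨R, hR⟩ := hdecay ε hε
    obtain ⟨ξ, hξ, hfar⟩ := exists_mem_triLat_le_norm (R + 1)
    refine le_of_stable_of_le_at_site hstab hξ fun b hb => ?_
    obtain ⟨k, hk⟩ := hR b b.2 (Bonds.le_norm_fst b.2 hb hfar)
    exact hnear _ k hk
  exact ⟨hle, fun v _ => mul_le_mul_of_nonneg_right hle (tsum_nonneg fun b => sq_nonneg _)⟩

/-- Stability of the homogeneous lattice: if ψ ∈ C⁴ is 1-periodic and even, a state y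
is strongly stable with constant λ, and Dy_b approaches ℤ at infinity, then
ψ''(0) ≥ λ, and hence y ≡ 0 is strongly stable with the same constant. -/
theorem stmt7 (ψ : ℝ → ℝ) (hψ : ContDiff ℝ 4 ψ)
    (hper : ∀ t : ℝ, ψ (t + 1) = ψ t) (heven : ∀ t : ℝ, ψ (-t) = ψ t)
    (y : E2 → ℝ) (lam : ℝ) (hlam : 0 < lam)
    (hstab : ∀ v : E2 → ℝ, (Function.support v).Finite →
      lam * ∑' b : Bonds, (v (b : E2 × E2).2 - v (b : E2 × E2).1) ^ 2 ≤
      ∑' b : Bonds, iteratedDeriv 2 ψ (y (b : E2 × E2).2 - y (b : E2 × E2).1) *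
        (v (b : E2 × E2).2 - v (b : E2 × E2).1) ^ 2)
    (hdecay : ∀ ε : ℝ, 0 < ε → ∃ R : ℝ, ∀ b ∈ Bonds, R ≤ ‖b.1‖ →
      ∃ k : ℤ, |y b.2 - y b.1 - k| < ε) :
    lam ≤ iteratedDeriv 2 ψ 0 ∧
    ∀ v : E2 → ℝ, (Function.support v).Finite →
      lam * ∑' b : Bonds, (v (b : E2 × E2).2 - v (b : E2 × E2).1) ^ 2 ≤
      iteratedDeriv 2 ψ 0 * ∑' b : Bonds, (v (b : E2 × E2).2 - v (b : E2 × E2).1) ^ 2 :=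
  stmt7_general ψ hψ hper y lam hstab hdecay
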